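/- arXiv:1210.2686 — 4 statements merged into one kernel-verified Lean document; each statement's English description precedes it below -/
import Mathlib

section
/- Let P₀, P₁, ..., Pₙ be points in ℝ³ forming an open piecewise linear curve in which consecutive points are distinct. For 1 ≤ m ≤ n−1 let αₘ ∈ [0, π] be the exterior angle at Pₘ, i.e., the angle between the vectors Pₘ − Pₘ₋₁ and Pₘ₊₁ − Pₘ. If the sum α₁ + ⋯ + αₙ₋₁ < π, then the PL curve is simple, i.e., the associated piecewise linear path from P₀ to Pₙ is injective. -/
/-!
The turning angles are the spherical lengths of the arcs joining consecutive edge directions, so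
the edge directions form a spherical polygonal path of length `S < π`. Such a path stays within
angle `S / 2` of a single direction `v` (a midpoint of the path), hence every edge makes an acute
angle with `v`. The height `⟪v, ·⟫` therefore increases strictly along the curve, which cannot
return to a point it has already visited.
-/

open InnerProductGeometry

/-- Uniform piecewise linear parametrization over `[0,1]` of the PL curve with
vertices `P 0, P 1, …, P n`. -/
noncomputable def plParam (n : ℕ) (P : ℕ → EuclideanSpace ℝ (Fin 3)) (t : ℝ) :
    EuclideanSpace ℝ (Fin 3) :=
  let j := min (n - 1) ⌊t * n⌋₊
  P j + (t * n - j) • (P (j + 1) - P j)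

namespace InnerProductGeometry

variable {V : Type*} [NormedAddCommGroup V] [InnerProductSpace ℝ V]

theorem inner_pos_of_angle_lt_pi_div_two {x y : V} (h : angle x y < Real.pi / 2) :
    0 < inner ℝ x y := by
  have hx : x ≠ 0 := by rintro rfl; simp at h
  have hy : y ≠ 0 := by rintro rfl; simp at h
  have hcos : 0 < Real.cos (angle x y) :=
    Real.cos_pos_of_mem_Ioo ⟨by linarith [angle_nonneg x y, Real.pi_pos], h⟩
  rw [← cos_angle_mul_norm_mul_norm]
  positivity

/-- The segment `[v, w]` misses `0`, so the angle from `v` moves continuously from `0` to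
`angle v w` along it, and the triangle inequality is an equality on nonnegative combinations. -/
theorem exists_angle_eq_of_mem_Icc {v w : V} (hv : v ≠ 0) (hw : w ≠ 0)
    (hvw : angle v w < Real.pi) {β : ℝ} (hβ : β ∈ Set.Icc 0 (angle v w)) :
    ∃ z, angle v z = β ∧ angle v z + angle z w = angle v w := by
  have hne : ∀ s ∈ Set.Icc (0 : ℝ) 1, AffineMap.lineMap v w s ≠ 0 := by
    intro s hs h0
    have hsbtw : Sbtw ℝ v 0 w := ⟨⟨s, hs, h0⟩, hv.symm, hw.symm⟩
    exact hvw.ne (by simpa [EuclideanGeometry.angle] using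
      EuclideanGeometry.angle_eq_pi_iff_sbtw.2 hsbtw)
  have hcont : ContinuousOn (fun s : ℝ => angle v (AffineMap.lineMap v w s)) (Set.Icc 0 1) :=
    fun s hs => ((continuousAt_angle (x := (v, AffineMap.lineMap v w s)) hv (hne s hs)).comp
      (f := fun s : ℝ => (v, AffineMap.lineMap v w s)) (by fun_prop)).continuousWithinAt
  obtain ⟨s, hs, hβs⟩ :=
    intermediate_value_Icc zero_le_one hcont (by simpa [angle_self hv] using hβ)
  refine ⟨AffineMap.lineMap v w s, hβs,
    (angle_eq_angle_add_add_angle_add_of_mem_span (hne s hs) ?_).symm⟩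
  rw [Submodule.mem_span_pair]
  exact ⟨⟨1 - s, sub_nonneg.2 hs.2⟩, ⟨s, hs.1⟩, (AffineMap.lineMap_apply_module v w s).symm⟩

theorem exists_angle_le_half_sum_angle (u : ℕ → V) (k : ℕ) (hu : ∀ i ≤ k, u i ≠ 0)
    (hsum : ∑ i ∈ Finset.range k, angle (u i) (u (i + 1)) < Real.pi) :
    ∃ v, ∀ i ≤ k, angle v (u i) ≤ (∑ i ∈ Finset.range k, angle (u i) (u (i + 1))) / 2 := by
  induction k with
  | zero => exact ⟨u 0, fun i hi => by simp [Nat.le_zero.1 hi, angle_self (hu 0 le_rfl)]⟩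
  | succ k ih =>
    rw [Finset.sum_range_succ] at hsum ⊢
    set S := ∑ i ∈ Finset.range k, angle (u i) (u (i + 1))
    set α := angle (u k) (u (k + 1))
    have hS : 0 ≤ S := Finset.sum_nonneg fun i _ => angle_nonneg _ _
    have hα : 0 ≤ α := angle_nonneg _ _
    obtain ⟨v, hv⟩ := ih (fun i hi => hu i (by omega)) (by linarith)
    have hv0 : v ≠ 0 := by
      rintro rfl
      have := hv 0 (Nat.zero_le k)
      rw [angle_zero_left] at this
      linarith
    have hθ : angle v (u (k + 1)) ≤ S / 2 + α :=
      (angle_le_angle_add_angle v (u k) (u (k + 1))).trans (by linarith [hv k le_rfl])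
    -- move `v` towards `u (k + 1)` by `α / 2`, or all the way if that is closer
    obtain ⟨z, hvz, hzw⟩ := exists_angle_eq_of_mem_Icc hv0 (hu (k + 1) le_rfl) (by linarith)
      (β := min (α / 2) (angle v (u (k + 1))))
      ⟨le_min (by linarith) (angle_nonneg _ _), min_le_right _ _⟩
    refine ⟨z, fun i hi => ?_⟩
    rcases Nat.lt_or_eq_of_le hi with hi | rfl
    · calc angle z (u i) ≤ angle z v + angle v (u i) := angle_le_angle_add_angle _ _ _
        _ ≤ α / 2 + S / 2 := by
          gcongr
          · rw [angle_comm, hvz]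
            exact min_le_left _ _
          · exact hv i (by omega)
        _ = (S + α) / 2 := by ring
    · rcases min_choice (α / 2) (angle v (u (k + 1))) with h | h <;> linarith

end InnerProductGeometry

noncomputable def plInterp (n : ℕ) (a : ℕ → ℝ) (t : ℝ) : ℝ :=
  let j := min (n - 1) ⌊t * n⌋₊
  a j + (t * n - j) * (a (j + 1) - a j)

theorem strictMono_plInterp {n : ℕ} (hn : 1 ≤ n) {a : ℕ → ℝ} (ha : ∀ m < n, a m < a (m + 1)) :
    StrictMono (plInterp n a) := by
  intro s t hst
  set js := min (n - 1) ⌊s * n⌋₊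
  set jt := min (n - 1) ⌊t * n⌋₊
  show a js + (s * n - js) * (a (js + 1) - a js) < a jt + (t * n - jt) * (a (jt + 1) - a jt)
  have hn' : (0 : ℝ) < n := by exact_mod_cast hn
  have hjt : jt < n := by omega
  have hjle : js ≤ jt := min_le_min_left _ (Nat.floor_mono (by gcongr))
  rcases hjle.eq_or_lt with heq | hlt
  · have hstep := ha jt hjt
    have hst' : s * n < t * n := by gcongr
    rw [heq]
    nlinarith
  · have hs_lt : s * n < js + 1 := (show js = ⌊s * n⌋₊ by omega) ▸ Nat.lt_floor_add_one _
    have ht_ge : (jt : ℝ) ≤ t * n := (Nat.le_floor_iff' (by omega)).1 (min_le_right _ _)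
    have hmono : a (js + 1) ≤ a jt :=
      (strictMonoOn_Iic_of_lt_succ (ψ := a) fun m hm => ha m hm).monotoneOn
        (by simp only [Set.mem_Iic]; omega) hjt.le hlt
    have hstep_s := ha js (by omega)
    have hstep_t := ha jt hjt
    nlinarith

theorem inner_plParam (n : ℕ) (P : ℕ → EuclideanSpace ℝ (Fin 3)) (v : EuclideanSpace ℝ (Fin 3))
    (t : ℝ) : inner ℝ v (plParam n P t) = plInterp n (fun m => inner ℝ v (P m)) t := by
  simp only [plParam, plInterp, inner_add_right, inner_smul_right, inner_sub_right]

theorem stmt_0 (n : ℕ) (hn : 1 ≤ n) (P : ℕ → EuclideanSpace ℝ (Fin 3))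
    (hdist : ∀ m < n, P m ≠ P (m + 1))
    (hsum : ∑ m ∈ Finset.Ico 1 n, angle (P m - P (m - 1)) (P (m + 1) - P m) < Real.pi) :
    Set.InjOn (plParam n P) (Set.Icc 0 1) := by
  set e : ℕ → EuclideanSpace ℝ (Fin 3) := fun m => P (m + 1) - P m
  have hsum' : ∑ i ∈ Finset.range (n - 1), angle (e i) (e (i + 1)) < Real.pi := by
    rw [Finset.sum_Ico_eq_sum_range] at hsum
    convert hsum using 2 with i
    simp only [e, add_comm 1 i, Nat.add_sub_cancel]
  obtain ⟨v, hv⟩ := exists_angle_le_half_sum_angle e (n - 1)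
    (fun i hi => sub_ne_zero.2 (hdist i (by omega)).symm) hsum'
  have hstep : ∀ m < n, inner ℝ v (P m) < inner ℝ v (P (m + 1)) := fun m hm => by
    have := inner_pos_of_angle_lt_pi_div_two ((hv m (by omega)).trans_lt (by linarith))
    rwa [inner_sub_right, sub_pos] at this
  have hinj : Function.Injective fun t => inner ℝ v (plParam n P t) := by
    simpa only [inner_plParam] using (strictMono_plInterp hn hstep).injective
  exact hinj.of_comp.injOn
end

section
/- Let P₀, …, Pₙ, with Pₙ₊₁ := P₀, be the vertices of a closed PL curve in ℝ³ with consecutive vertices distinct, and for each m (indices mod n+1) let αₘ ∈ [0,π] be the exterior angle at Pₘ. If the closed curve is nondegenerate (not contained in a single line traversed back and forth), then Σₘ αₘ ≥ 2π. -/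
/-!
Deleting a vertex does not increase the total curvature of a closed polygon. If the edges `u`, `v`
at the deleted vertex are replaced by `u + v`, the triangle inequality for angles bounds the two new
exterior angles by `∠(a, u) + ∠(u, u + v)` and `∠(u + v, v) + ∠(v, c)`, and
`∠(u, u + v) + ∠(u + v, v) = ∠(u, v)` because `u + v` lies between `u` and `v`. Deleting vertices
while two distinct ones survive ends at a segment traversed back and forth, of total curvature `2π`.
-/

open InnerProductGeometry

theorem Function.Periodic.sum_range_comp_add {M : Type*} [AddCommGroup M] {f : ℕ → M} {N : ℕ}
    (hf : Function.Periodic f N) (s : ℕ) :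
    ∑ m ∈ Finset.range N, f (m + s) = ∑ m ∈ Finset.range N, f m := by
  induction s with
  | zero => rfl
  | succ s ih =>
    have h := Finset.sum_range_succ' (fun m => f (m + s)) N
    rw [Finset.sum_range_succ, add_comm N s, hf s, zero_add, add_left_inj] at h
    simp only [add_right_comm _ 1 s, ← add_assoc] at h ⊢
    rw [← h, ih]

namespace Fenchel

open Real Finset Function

variable {V : Type*} [NormedAddCommGroup V] [InnerProductSpace ℝ V]

theorem angle_add_add_angle_add_le (a u v c : V) :
    angle a (u + v) + angle (u + v) c ≤ angle a u + angle u v + angle v c := by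
  by_cases h : u = 0 ∧ v = 0
  · obtain ⟨rfl, rfl⟩ := h
    simp only [add_zero, angle_zero_left, angle_zero_right]
    linarith [pi_pos]
  have hsplit : angle u (u + v) + angle (u + v) v = angle u v := by
    rcases not_and_or.mp h with hu | hv
    · have := angle_eq_angle_add_add_angle_add v hu
      rw [add_comm v u] at this
      linarith [angle_comm u v, angle_comm u (u + v), angle_comm v (u + v)]
    · rw [angle_eq_angle_add_add_angle_add u hv, angle_comm v]
  linarith [angle_le_angle_add_angle a u (u + v), angle_le_angle_add_angle (u + v) v c]

/-- A repeated vertex gives a zero edge, with `angle 0 x = π / 2`; the lemmas below allow this. -/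
noncomputable def exteriorAngle (P : ℕ → V) (m : ℕ) : ℝ :=
  angle (P (m + 1) - P m) (P (m + 2) - P (m + 1))

noncomputable def totalCurvature (P : ℕ → V) (N : ℕ) : ℝ :=
  ∑ m ∈ range N, exteriorAngle P m

variable {P : ℕ → V} {N : ℕ}

theorem totalCurvature_comp_add (hP : Periodic P N) (s : ℕ) :
    totalCurvature (fun m => P (m + s)) N = totalCurvature P N := by
  have hper : Periodic (exteriorAngle P) N := fun m => by
    simp only [exteriorAngle, add_right_comm m N, hP _]
  simpa only [totalCurvature, exteriorAngle, add_right_comm _ s] using hper.sum_range_comp_add s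

theorem totalCurvature_two (hP : Periodic P 2) (h : P 0 ≠ P 1) :
    totalCurvature P 2 = 2 * π := by
  have hu : P 1 - P 0 ≠ 0 := sub_ne_zero.mpr h.symm
  have h2 : P 2 = P 0 := hP 0
  have h3 : P 3 = P 1 := hP 1
  simp only [totalCurvature, exteriorAngle, sum_range_succ, sum_range_zero, h2, h3]
  rw [← neg_sub (P 1) (P 0), angle_self_neg_of_nonzero hu, angle_neg_self_of_nonzero hu]
  ring

theorem totalCurvature_mod_le (hP : Periodic P (N + 1)) (hN : 2 ≤ N) :
    totalCurvature (fun m => P (m % N)) N ≤ totalCurvature P (N + 1) := by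
  obtain ⟨k, rfl⟩ : ∃ k, N = k + 2 := ⟨N - 2, by omega⟩
  have hinit : ∑ m ∈ range k, exteriorAngle (fun m => P (m % (k + 2))) m =
      ∑ m ∈ range k, exteriorAngle P m := by
    refine sum_congr rfl fun m hm => ?_
    have := mem_range.mp hm
    simp only [exteriorAngle, Nat.mod_eq_of_lt (by omega : m < k + 2),
      Nat.mod_eq_of_lt (by omega : m + 1 < k + 2), Nat.mod_eq_of_lt (by omega : m + 2 < k + 2)]
  have h3 : P (k + 3) = P 0 := by simpa using hP 0
  have h4 : P (k + 4) = P 1 := by rw [← hP 1]; ring_nf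
  have m3 : (k + 3) % (k + 2) = 1 := by
    rw [show k + 3 = 1 + (k + 2) by ring, Nat.add_mod_right, Nat.mod_eq_of_lt (by omega)]
  simp only [totalCurvature, sum_range_succ, hinit]
  simp only [exteriorAngle, add_assoc, Nat.reduceAdd,
    Nat.mod_self, m3, Nat.mod_eq_of_lt (by omega : k < k + 2),
    Nat.mod_eq_of_lt (by omega : k + 1 < k + 2), h3, h4]
  have hmerge := angle_add_add_angle_add_le (P (k + 1) - P k) (P (k + 2) - P (k + 1))
    (P 0 - P (k + 2)) (P 1 - P 0)
  rw [sub_add_sub_cancel'] at hmerge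
  linarith

theorem exists_periodic_totalCurvature_le (hP : Periodic P (N + 1)) (hN : 2 ≤ N) {i j : ℕ}
    (hi : i < N + 1) (hj : j < N + 1) (hij : P i ≠ P j) :
    ∃ Q : ℕ → V, Periodic Q N ∧ totalCurvature Q N ≤ totalCurvature P (N + 1) ∧
      ∃ i' < N, ∃ j' < N, Q i' ≠ Q j' := by
  obtain ⟨s, hs, hsi, hsj⟩ : ∃ s < N + 1, s ≠ i ∧ s ≠ j := by
    by_contra! h
    have := h 0; have := h 1; have := h 2
    omega
  -- rotate so that the vertex `P s` to be deleted sits at index `N`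
  set Q : ℕ → V := fun m => P (m + (s + 1))
  have hQ : Periodic Q (N + 1) := fun m => by simp only [Q, add_right_comm m (N + 1)]; exact hP _
  have hkept : ∀ t < N + 1, t ≠ s → ∃ t' < N, Q t' = P t := by
    intro t ht hts
    rcases lt_or_gt_of_ne hts with h | h
    · refine ⟨t + N - s, by omega, ?_⟩
      simp only [Q]
      rw [show t + N - s + (s + 1) = t + (N + 1) by omega]
      exact hP t
    · exact ⟨t - (s + 1), by omega, by simp only [Q]; rw [Nat.sub_add_cancel (by omega)]⟩
  obtain ⟨i', hi', hQi⟩ := hkept i hi hsi.symm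
  obtain ⟨j', hj', hQj⟩ := hkept j hj hsj.symm
  refine ⟨fun m => Q (m % N), fun m => by simp, ?_, i', hi', j', hj', ?_⟩
  · rw [← totalCurvature_comp_add hP (s + 1)]
    exact totalCurvature_mod_le hQ hN
  · simpa only [Nat.mod_eq_of_lt hi', Nat.mod_eq_of_lt hj', hQi, hQj] using hij

theorem two_pi_le_totalCurvature (hP : Periodic P N) {i j : ℕ} (hi : i < N) (hj : j < N)
    (hij : P i ≠ P j) : 2 * π ≤ totalCurvature P N := by
  induction N generalizing P i j with
  | zero => omega
  | succ N ih =>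
    rcases lt_or_ge N 2 with hN | hN
    · interval_cases N
      · obtain rfl : i = 0 := by omega
        obtain rfl : j = 0 := by omega
        exact absurd rfl hij
      · have h01 : P 0 ≠ P 1 := by
          intro h
          interval_cases i <;> interval_cases j <;> simp_all
        exact (totalCurvature_two hP h01).ge
    · obtain ⟨Q, hQ, hle, i', hi', j', hj', hQij⟩ :=
        exists_periodic_totalCurvature_le hP hN hi hj hij
      exact (ih hQ hi' hj' hQij).trans hle

end Fenchel

theorem stmt_7_general (n : ℕ) (P : ℕ → EuclideanSpace ℝ (Fin 3))
    (hper : ∀ m, P (m + (n + 1)) = P m)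
    (hnondeg : ¬ Collinear ℝ (Set.range P)) :
    (2 : ℝ) * Real.pi ≤
      ∑ m ∈ Finset.range (n + 1),
        angle (P (m + 1) - P m) (P (m + 2) - P (m + 1)) := by
  obtain ⟨i, hi⟩ : ∃ i, P i ≠ P 0 := by
    by_contra! h
    apply hnondeg
    rw [show P = fun _ => P 0 from funext h, Set.range_const]
    exact collinear_singleton ℝ _
  exact Fenchel.two_pi_le_totalCurvature hper (Nat.mod_lt i n.succ_pos) n.succ_pos
    (by rwa [Function.Periodic.map_mod_nat hper])

theorem stmt_7 (n : ℕ) (P : ℕ → EuclideanSpace ℝ (Fin 3))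
    (hper : ∀ m, P (m + (n + 1)) = P m)
    (hdist : ∀ m, P m ≠ P (m + 1))
    (hnondeg : ¬ Collinear ℝ (Set.range P)) :
    (2 : ℝ) * Real.pi ≤
      ∑ m ∈ Finset.range (n + 1),
        angle (P (m + 1) - P m) (P (m + 2) - P (m + 1)) :=
  stmt_7_general n P hper hnondeg
end

section
/- Let P₀, …, Pₙ be points in ℝ³ with consecutive points distinct, and suppose every exterior angle αₘ (1 ≤ m ≤ n−1) of the open PL curve satisfies αₘ < π/(n−1). Then the PL curve is simple. -/
/-!
Let `eₘ = Pₘ₊₁ - Pₘ`. The exterior angles add up to less than `π`, so by the triangle inequality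
for angles every edge `eₘ` makes angles `a` with `e₀` and `b` with `eₙ₋₁` such that `a + b < π`;
hence `cos a + cos b > 0`, i.e. every edge has positive inner product with
`w = e₀ / ‖e₀‖ + eₙ₋₁ / ‖eₙ₋₁‖`. The height `⟪w, ·⟫` is therefore strictly increasing along the
curve, which is then injective.
-/

open InnerProductGeometry

open Real Set Finset

noncomputable def segIndex (n : ℕ) (t : ℝ) : ℕ := min (n - 1) ⌊t * n⌋₊

noncomputable def piecewiseLinear {V : Type*} [AddCommGroup V] [Module ℝ V] (n : ℕ)
    (P : ℕ → V) (t : ℝ) : V :=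
  P (segIndex n t) + (t * n - segIndex n t) • (P (segIndex n t + 1) - P (segIndex n t))

theorem segIndex_le (n : ℕ) (t : ℝ) : segIndex n t ≤ n - 1 := min_le_left _ _

theorem segIndex_mono (n : ℕ) : Monotone (segIndex n) := fun _ _ hst =>
  min_le_min_left _ (Nat.floor_mono (by gcongr))

theorem segIndex_le_mul {n : ℕ} {t : ℝ} (ht : 0 ≤ t) : (segIndex n t : ℝ) ≤ t * n :=
  calc (segIndex n t : ℝ) ≤ ⌊t * n⌋₊ := by exact_mod_cast min_le_right _ _
    _ ≤ t * n := Nat.floor_le (by positivity)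

theorem mul_lt_segIndex_add_one {n : ℕ} {t : ℝ} (h : segIndex n t < n - 1) :
    t * n < segIndex n t + 1 := by
  have hfloor : segIndex n t = ⌊t * n⌋₊ := by unfold segIndex at *; omega
  rw [hfloor]
  exact Nat.lt_floor_add_one _

theorem map_piecewiseLinear {V W F : Type*} [AddCommGroup V] [Module ℝ V] [AddCommGroup W]
    [Module ℝ W] [FunLike F V W] [LinearMapClass F ℝ V W] (φ : F) (n : ℕ) (P : ℕ → V) (t : ℝ) :
    φ (piecewiseLinear n P t) = piecewiseLinear n (φ ∘ P) t := by
  simp [piecewiseLinear]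

theorem strictMonoOn_piecewiseLinear {n : ℕ} (hn : 0 < n) {a : ℕ → ℝ}
    (ha : StrictMonoOn a (Set.Iic n)) : StrictMonoOn (piecewiseLinear n a) (Icc 0 1) := by
  intro s _ t ht hst
  have hslope : ∀ j ≤ n - 1, 0 < a (j + 1) - a j := fun j hj =>
    sub_pos.2 (ha (by simp; omega) (by simp; omega) (by omega))
  set j := segIndex n s
  set k := segIndex n t
  have hj := hslope j (segIndex_le n s)
  have hk_le : k ≤ n - 1 := segIndex_le n t
  have hk := hslope k hk_le
  simp only [piecewiseLinear, smul_eq_mul]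
  rcases (segIndex_mono n hst.le).eq_or_lt with hjk | hjk
  · have hst' : s * n < t * n := by gcongr
    rw [← hjk]
    nlinarith
  · have hs1 := mul_lt_segIndex_add_one (hjk.trans_le hk_le)
    have ht0 := segIndex_le_mul (n := n) ht.1
    calc a j + (s * n - j) * (a (j + 1) - a j) < a (j + 1) := by nlinarith
      _ ≤ a k := ha.monotoneOn (by simp; omega) (by simp; omega) hjk
      _ ≤ a k + (t * n - k) * (a (k + 1) - a k) := by nlinarith

section Angles

variable {V : Type*} [NormedAddCommGroup V] [InnerProductSpace ℝ V]

theorem InnerProductGeometry.angle_le_sum_angle {f : ℕ → V} {a b : ℕ} (ha : f a ≠ 0)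
    (hab : a ≤ b) : angle (f a) (f b) ≤ ∑ j ∈ Ico a b, angle (f j) (f (j + 1)) := by
  induction b, hab using Nat.le_induction with
  | base => simp [angle_self ha]
  | succ b hab ih =>
    rw [sum_Ico_succ_top hab]
    exact (angle_le_angle_add_angle _ (f b) _).trans (by linarith)

theorem InnerProductGeometry.real_inner_smul_inv_norm (x y : V) :
    inner ℝ x (‖y‖⁻¹ • y) = ‖x‖ * cos (angle x y) := by
  rcases eq_or_ne y 0 with rfl | hy
  · simp
  · rw [real_inner_smul_right, ← cos_angle_mul_norm_mul_norm]
    field_simp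

theorem InnerProductGeometry.real_inner_pos_of_angle_add_angle_lt_pi {x y z : V} (hx : x ≠ 0)
    (h : angle y x + angle x z < π) : 0 < inner ℝ x (‖y‖⁻¹ • y + ‖z‖⁻¹ • z) := by
  rw [angle_comm] at h
  rw [inner_add_right, real_inner_smul_inv_norm, real_inner_smul_inv_norm, ← mul_add]
  have : cos (π - angle x z) < cos (angle x y) :=
    cos_lt_cos_of_nonneg_of_le_pi (angle_nonneg _ _) (by linarith [angle_nonneg x z])
      (by linarith)
  rw [cos_pi_sub] at this
  exact mul_pos (norm_pos_iff.2 hx) (by linarith)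

end Angles

theorem Finset.sum_range_lt_of_forall_lt_div {k : ℕ} (hk : 0 < k) {f : ℕ → ℝ} {c : ℝ}
    (h : ∀ j < k, f j < c / k) : ∑ j ∈ range k, f j < c := by
  calc ∑ j ∈ range k, f j < ∑ _j ∈ range k, c / k :=
        sum_lt_sum_of_nonempty (nonempty_range_iff.2 hk.ne') fun j hj => h j (mem_range.1 hj)
    _ = c := by simp [field]

theorem stmt_8 (n : ℕ) (hn : 2 ≤ n) (P : ℕ → EuclideanSpace ℝ (Fin 3))
    (hdist : ∀ m < n, P m ≠ P (m + 1))
    (hang : ∀ m, 1 ≤ m → m ≤ n - 1 →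
      angle (P m - P (m - 1)) (P (m + 1) - P m) < Real.pi / ((n : ℝ) - 1)) :
    Set.InjOn (plParam n P) (Set.Icc 0 1) := by
  set E : ℕ → EuclideanSpace ℝ (Fin 3) := fun m => P (m + 1) - P m
  have hE : ∀ m < n, E m ≠ 0 := fun m hm => sub_ne_zero.2 (hdist m hm).symm
  have hturn : ∑ j ∈ range (n - 1), angle (E j) (E (j + 1)) < π := by
    refine sum_range_lt_of_forall_lt_div (by omega) fun j hj => ?_
    rw [Nat.cast_sub (by omega), Nat.cast_one]
    simpa using hang (j + 1) (by omega) (by omega)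
  set w := ‖E 0‖⁻¹ • E 0 + ‖E (n - 1)‖⁻¹ • E (n - 1)
  have hpos : ∀ m < n, 0 < inner ℝ (E m) w := fun m hm =>
    real_inner_pos_of_angle_add_angle_lt_pi (hE m hm) <| calc
      angle (E 0) (E m) + angle (E m) (E (n - 1))
          ≤ ∑ j ∈ Ico 0 m, angle (E j) (E (j + 1))
            + ∑ j ∈ Ico m (n - 1), angle (E j) (E (j + 1)) :=
        add_le_add (angle_le_sum_angle (hE 0 (by omega)) m.zero_le)
          (angle_le_sum_angle (hE m hm) (by omega))
      _ = ∑ j ∈ range (n - 1), angle (E j) (E (j + 1)) := by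
        rw [sum_Ico_consecutive _ m.zero_le (by omega), Nat.Ico_zero_eq_range]
      _ < π := hturn
  have hmono : StrictMonoOn (fun m => inner ℝ w (P m)) (Set.Iic n) :=
    strictMonoOn_Iic_of_lt_succ fun m hm => by
      simpa [Order.succ_eq_add_one, real_inner_comm w, E, inner_sub_right] using hpos m hm
  refine InjOn.of_comp (f := plParam n P) (g := innerSL ℝ w) ?_
  -- `plParam n P` is definitionally `piecewiseLinear n P`
  have hheight : innerSL ℝ w ∘ plParam n P = piecewiseLinear n (fun m => inner ℝ w (P m)) :=
    funext fun t => map_piecewiseLinear (innerSL ℝ w) n P t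
  rw [hheight]
  exact (strictMonoOn_piecewiseLinear (by omega) hmono).injOn
end

section
/- Let C : [0,1] → ℝ³ be C¹ and regular with Lipschitz derivative (constant γ), and let λ = min_{t∈[0,1]} |C′(t)| > 0. Fix h > 0 with h < λ/(2γ), and let t₀ < t₁ < ⋯ < tₙ lie in a subinterval of [0,1] of length at most h, with Pⱼ = C(tⱼ). Then consecutive points Pⱼ are distinct, and each exterior angle αⱼ of the PL curve (P₀,…,Pₙ) satisfies cos αⱼ ≥ 1 − 12γh/λ. -/
open InnerProductGeometry

variable {E : Type*} [NormedAddCommGroup E] [InnerProductSpace ℝ E]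

lemma aux_unit_dist (x y : E) (hx : x ≠ 0) (hy : y ≠ 0) :
    ‖‖x‖⁻¹ • x - ‖y‖⁻¹ • y‖ ≤ 2 * ‖x - y‖ / ‖y‖ := by
  have hxn : (0:ℝ) < ‖x‖ := norm_pos_iff.mpr hx
  have hyn : (0:ℝ) < ‖y‖ := norm_pos_iff.mpr hy
  have key : ‖x‖⁻¹ • x - ‖y‖⁻¹ • y = ‖y‖⁻¹ • (x - y) + (‖x‖⁻¹ - ‖y‖⁻¹) • x := by
    simp only [smul_sub, sub_smul]; abel
  rw [key]
  have h2 : ‖(‖x‖⁻¹ - ‖y‖⁻¹) • x‖ ≤ ‖x - y‖ / ‖y‖ := by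
    rw [norm_smul]
    have heq : ‖x‖⁻¹ - ‖y‖⁻¹ = (‖y‖ - ‖x‖) / (‖x‖ * ‖y‖) := by field_simp
    rw [Real.norm_eq_abs, heq, abs_div, abs_of_pos (show (0:ℝ) < ‖x‖*‖y‖ by positivity)]
    have hb : |‖y‖ - ‖x‖| ≤ ‖x - y‖ := by
      rw [abs_sub_comm]; exact abs_norm_sub_norm_le x y
    calc |‖y‖ - ‖x‖| / (‖x‖ * ‖y‖) * ‖x‖ = |‖y‖ - ‖x‖| / ‖y‖ := by field_simp
      _ ≤ ‖x - y‖ / ‖y‖ := by gcongr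
  calc ‖‖y‖⁻¹ • (x - y) + (‖x‖⁻¹ - ‖y‖⁻¹) • x‖
      ≤ ‖‖y‖⁻¹ • (x - y)‖ + ‖(‖x‖⁻¹ - ‖y‖⁻¹) • x‖ := norm_add_le _ _
    _ ≤ ‖x - y‖ / ‖y‖ + ‖x - y‖ / ‖y‖ := by
        refine add_le_add ?_ h2
        rw [norm_smul, Real.norm_eq_abs, abs_of_pos (by positivity)]
        rw [div_eq_inv_mul]
    _ = 2 * ‖x - y‖ / ‖y‖ := by ring

lemma aux_cos_eq (x y : E) (hx : x ≠ 0) (hy : y ≠ 0) :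
    Real.cos (angle x y) = 1 - ‖‖x‖⁻¹ • x - ‖y‖⁻¹ • y‖ ^ 2 / 2 := by
  have hxn : (0:ℝ) < ‖x‖ := norm_pos_iff.mpr hx
  have hyn : (0:ℝ) < ‖y‖ := norm_pos_iff.mpr hy
  rw [cos_angle, norm_sub_sq_real, norm_smul, norm_smul, real_inner_smul_left,
    real_inner_smul_right]
  rw [Real.norm_eq_abs, Real.norm_eq_abs, abs_of_pos (by positivity), abs_of_pos (by positivity)]
  field_simp
  ring

lemma aux_smul_unit (v : E) (d : ℝ) (hd : 0 < d) (hv : v ≠ 0) :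
    ‖d • v‖⁻¹ • (d • v) = ‖v‖⁻¹ • v := by
  have hvn : (0:ℝ) < ‖v‖ := norm_pos_iff.mpr hv
  rw [norm_smul, Real.norm_eq_abs, abs_of_pos hd, smul_smul]
  congr 1
  field_simp

lemma aux_angle (x y v : E) (ε d1 d2 : ℝ) (hv : v ≠ 0) (hd1 : 0 < d1) (hd2 : 0 < d2)
    (hε : 0 ≤ ε) (hεlt : ε < 1)
    (hx : ‖x - d1 • v‖ ≤ ε * ‖d1 • v‖) (hy : ‖y - d2 • v‖ ≤ ε * ‖d2 • v‖) :
    1 - 8 * ε ^ 2 ≤ Real.cos (angle x y) := by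
  have hv1 : (0:ℝ) < ‖d1 • v‖ := norm_pos_iff.mpr (smul_ne_zero (ne_of_gt hd1) hv)
  have hv2 : (0:ℝ) < ‖d2 • v‖ := norm_pos_iff.mpr (smul_ne_zero (ne_of_gt hd2) hv)
  have hxne : x ≠ 0 := by
    intro h0
    rw [h0, zero_sub, norm_neg] at hx
    nlinarith
  have hyne : y ≠ 0 := by
    intro h0
    rw [h0, zero_sub, norm_neg] at hy
    nlinarith
  have d1le : ‖‖x‖⁻¹ • x - ‖v‖⁻¹ • v‖ ≤ 2 * ε := by
    have := aux_unit_dist x (d1 • v) hxne (smul_ne_zero (ne_of_gt hd1) hv)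
    rw [aux_smul_unit v d1 hd1 hv] at this
    calc ‖‖x‖⁻¹ • x - ‖v‖⁻¹ • v‖ ≤ 2 * ‖x - d1 • v‖ / ‖d1 • v‖ := this
      _ ≤ 2 * (ε * ‖d1 • v‖) / ‖d1 • v‖ := by gcongr
      _ = 2 * ε := by field_simp
  have d2le : ‖‖y‖⁻¹ • y - ‖v‖⁻¹ • v‖ ≤ 2 * ε := by
    have := aux_unit_dist y (d2 • v) hyne (smul_ne_zero (ne_of_gt hd2) hv)
    rw [aux_smul_unit v d2 hd2 hv] at this
    calc ‖‖y‖⁻¹ • y - ‖v‖⁻¹ • v‖ ≤ 2 * ‖y - d2 • v‖ / ‖d2 • v‖ := this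
      _ ≤ 2 * (ε * ‖d2 • v‖) / ‖d2 • v‖ := by gcongr
      _ = 2 * ε := by field_simp
  have dtot : ‖‖x‖⁻¹ • x - ‖y‖⁻¹ • y‖ ≤ 4 * ε := by
    calc ‖‖x‖⁻¹ • x - ‖y‖⁻¹ • y‖
        ≤ ‖‖x‖⁻¹ • x - ‖v‖⁻¹ • v‖ + ‖‖v‖⁻¹ • v - ‖y‖⁻¹ • y‖ := norm_sub_le_norm_sub_add_norm_sub _ _ _
      _ ≤ 2 * ε + 2 * ε := by
          refine add_le_add d1le ?_
          rw [norm_sub_rev]; exact d2le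
      _ = 4 * ε := by ring
  rw [aux_cos_eq x y hxne hyne]
  have hnn : (0:ℝ) ≤ ‖‖x‖⁻¹ • x - ‖y‖⁻¹ • y‖ := norm_nonneg _
  nlinarith [sq_nonneg ε]


theorem stmt_13 (C C' : ℝ → EuclideanSpace ℝ (Fin 3)) (γ lam h : ℝ)
    (hderiv : ∀ t ∈ Set.Icc (0 : ℝ) 1, HasDerivWithinAt C (C' t) (Set.Icc 0 1) t)
    (hlip : ∀ s ∈ Set.Icc (0 : ℝ) 1, ∀ u ∈ Set.Icc (0 : ℝ) 1,
      ‖C' u - C' s‖ ≤ γ * |u - s|)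
    (hγ : 0 < γ)
    -- `lam` is the (attained, positive) minimum of `‖C'‖` on `[0,1]`
    (hlam : IsLeast ((fun t => ‖C' t‖) '' Set.Icc 0 1) lam) (hlampos : 0 < lam)
    (hh : 0 < h) (hhsmall : h < lam / (2 * γ))
    (n : ℕ) (t : ℕ → ℝ) (a : ℝ)
    (hmono : ∀ j < n, t j < t (j + 1))
    (hrange : ∀ j ≤ n, t j ∈ Set.Icc a (a + h))
    (hsub : Set.Icc a (a + h) ⊆ Set.Icc 0 1)
    (P : ℕ → EuclideanSpace ℝ (Fin 3)) (hP : ∀ j, P j = C (t j)) :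
    (∀ j < n, P j ≠ P (j + 1)) ∧
    (∀ j, 1 ≤ j → j ≤ n - 1 →
      1 - 12 * γ * h / lam ≤
        Real.cos (angle (P j - P (j - 1)) (P (j + 1) - P j))) := by
  have hγh : γ * h < lam / 2 := by
    have := (div_lt_div_iff₀ (by positivity) (by positivity)).mp
      (show h / 1 < lam / (2 * γ) by simpa using hhsmall)
    nlinarith
  have hlamle : ∀ τ ∈ Set.Icc a (a + h), lam ≤ ‖C' τ‖ := fun τ hτ =>
    hlam.2 ⟨τ, hsub hτ, rfl⟩
  -- chord estimate
  have chord : ∀ m ∈ Set.Icc a (a + h), ∀ s ∈ Set.Icc a (a + h), ∀ u ∈ Set.Icc a (a + h),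
      ‖C u - C s - (u - s) • C' m‖ ≤ γ * h * |u - s| := by
    intro m hm s hs u hu
    have key := Convex.norm_image_sub_le_of_norm_hasDerivWithin_le
      (f := fun τ => C τ - τ • C' m) (f' := fun τ => C' τ - C' m)
      (s := Set.Icc a (a + h)) (C := γ * h)
      (fun τ hτ => ((hderiv τ (hsub hτ)).mono hsub).sub
        (by simpa using ((hasDerivAt_id τ).smul_const (C' m)).hasDerivWithinAt))
      (fun τ hτ => by
        have h1 := hlip m (hsub hm) τ (hsub hτ)
        have h2 : |τ - m| ≤ h := by
          rcases hm with ⟨hm1, hm2⟩; rcases hτ with ⟨hτ1, hτ2⟩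
          rw [abs_le]; constructor <;> linarith
        calc ‖C' τ - C' m‖ ≤ γ * |τ - m| := h1
          _ ≤ γ * h := by gcongr)
      (convex_Icc a (a + h)) hs hu
    have heq : C u - u • C' m - (C s - s • C' m) = C u - C s - (u - s) • C' m := by
      rw [sub_smul]; abel
    rw [heq] at key
    simpa [Real.norm_eq_abs] using key
  -- lower bound on chord length
  have chordlow : ∀ s ∈ Set.Icc a (a + h), ∀ u ∈ Set.Icc a (a + h), s < u →
      (lam - γ * h) * (u - s) ≤ ‖C u - C s‖ := by
    intro s hs u hu hsu
    have h1 := chord s hs s hs u hu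
    have h2 : ‖(u - s) • C' s‖ - ‖C u - C s - (u - s) • C' s‖ ≤ ‖C u - C s‖ := by
      have := norm_sub_norm_le ((u - s) • C' s) ((u - s) • C' s - (C u - C s))
      simp only [sub_sub_cancel] at this
      rw [norm_sub_rev (C u - C s)] at h1 ⊢
      linarith [this]
    have h3 : (u - s) * lam ≤ ‖(u - s) • C' s‖ := by
      rw [norm_smul, Real.norm_eq_abs, abs_of_pos (by linarith)]
      exact mul_le_mul_of_nonneg_left (hlamle s hs) (by linarith)
    have h4 : |u - s| = u - s := abs_of_pos (by linarith)
    rw [h4] at h1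
    nlinarith
  constructor
  · intro j hj
    rw [hP, hP]
    have hs := hrange j (le_of_lt hj)
    have hu := hrange (j + 1) hj
    have hlt := hmono j hj
    have hpos : (0:ℝ) < (lam - γ * h) * (t (j + 1) - t j) := by nlinarith
    intro heq
    have := chordlow (t j) hs (t (j + 1)) hu hlt
    rw [← heq, sub_self, norm_zero] at this
    linarith
  · intro j hj1 hj2
    have hjn : j + 1 ≤ n := by omega
    have hjm : j - 1 + 1 = j := by omega
    have h0 := hrange (j - 1) (by omega)
    have h1 := hrange j (by omega)
    have h2 := hrange (j + 1) hjn
    have hlt1 : t (j - 1) < t j := by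
      have := hmono (j - 1) (by omega); rwa [hjm] at this
    have hlt2 : t j < t (j + 1) := hmono j (by omega)
    set v := C' (t j) with hv
    have hvlam : lam ≤ ‖v‖ := hlamle (t j) h1
    have hvne : v ≠ 0 := by
      intro h0'
      rw [h0', norm_zero] at hvlam
      linarith
    set ε := γ * h / lam with hε
    have hεpos : 0 < ε := by positivity
    have hεhalf : ε < 1 / 2 := by
      rw [hε, div_lt_div_iff₀ hlampos (by norm_num)]
      linarith
    have bnd : ∀ s ∈ Set.Icc a (a + h), ∀ u ∈ Set.Icc a (a + h), s < u →
        ‖(C u - C s) - (u - s) • v‖ ≤ ε * ‖(u - s) • v‖ := by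
      intro s hs u hu hsu
      have hc := chord (t j) h1 s hs u hu
      have : ε * ((u - s) * lam) ≤ ε * ‖(u - s) • v‖ := by
        apply mul_le_mul_of_nonneg_left _ (le_of_lt hεpos)
        rw [norm_smul, Real.norm_eq_abs, abs_of_pos (by linarith)]
        exact mul_le_mul_of_nonneg_left hvlam (by linarith)
      have heq : ε * ((u - s) * lam) = γ * h * (u - s) := by
        rw [hε]; field_simp
      rw [abs_of_pos (by linarith : (0:ℝ) < u - s)] at hc
      linarith
    have key := aux_angle (C (t j) - C (t (j - 1))) (C (t (j + 1)) - C (t j)) v ε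
      (t j - t (j - 1)) (t (j + 1) - t j) hvne (by linarith) (by linarith)
      (le_of_lt hεpos) (by linarith)
      (bnd (t (j - 1)) h0 (t j) h1 hlt1)
      (bnd (t j) h1 (t (j + 1)) h2 hlt2)
    rw [hP, hP, hP]
    calc 1 - 12 * γ * h / lam ≤ 1 - 8 * ε ^ 2 := by
          have : 8 * ε ^ 2 ≤ 12 * ε := by nlinarith
          have heq2 : 12 * ε = 12 * γ * h / lam := by rw [hε]; ring
          linarith [heq2 ▸ this]
      _ ≤ Real.cos (angle (C (t j) - C (t (j - 1))) (C (t (j + 1)) - C (t j))) := key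
end
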